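/- With ‖A‖_∂ = max{Tr(Aᵀ∂h) : ‖h‖_* ≤ 1} for a symmetric norm ‖·‖ on ℝⁿ, the module inequalities ‖(∂f)·g‖_∂ ≤ ‖g‖_∞ ‖∂f‖_∂ and ‖g·(∂f)‖_∂ ≤ ‖g‖_∞ ‖∂f‖_∂ hold for all f, g ∈ ℝⁿ, where (∂f)_{ij} = (fᵢ−fⱼ)/√(2n), ((∂f)·g)_{ij} = gⱼ(∂f)_{ij}, and (g·∂f)_{ij} = gᵢ(∂f)_{ij}. -/

import Mathlib

/-!
Both module actions have the same image under the adjoint `∂*` of `∂` for the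
trace pairing, namely the weighted Laplacian `(L_g f)ᵢ = ∑ⱼ (gᵢ + gⱼ)(fᵢ − fⱼ)/(2n)`,
and `∂*∂f = L_𝟏 f`. By Hahn–Banach `‖A‖_∂ = ‖∂*A‖`, so the claim is
`‖L_g f‖ ≤ ‖g‖_∞ ‖L_𝟏 f‖`. Since `L_g f` is linear in `g` and the norm is convex, it
suffices to check this at the vertices `g = c ε` of the cube, `ε` a sign vector. There
`L_ε f = ε ⊙ D_ε (L_𝟏 f)` with `D_ε` doubly stochastic, and by Birkhoff's theorem a
symmetric norm does not increase under a doubly stochastic matrix.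
-/

open Finset

/-- The symmetric matrix `Θ_x`: off-diagonal entries `(xᵢ+xⱼ)/(2n)`, diagonal chosen
so that every row sums to zero. -/
noncomputable def Theta (n : ℕ) (x : Fin n → ℝ) : Matrix (Fin n) (Fin n) ℝ :=
  fun i j =>
    if i = j then -(∑ k ∈ Finset.univ.erase i, (x i + x k) / (2 * n))
    else (x i + x j) / (2 * n)

/-- `I_x = Iₙ + Θ_x`. -/
noncomputable def Imat (n : ℕ) (x : Fin n → ℝ) : Matrix (Fin n) (Fin n) ℝ :=
  1 + Theta n x

/-- `E f`: the constant vector whose entries all equal the mean of `f`. -/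
noncomputable def meanVec (n : ℕ) (f : Fin n → ℝ) : Fin n → ℝ :=
  fun _ => (∑ i, f i) / n

/-- The sup norm `‖x‖_∞`. -/
noncomputable def linf (n : ℕ) (x : Fin n → ℝ) : ℝ :=
  sSup (Set.range fun i => |x i|)

/-- The Ky Fan `k`-norm: the sum of the `k` largest absolute values of the entries,
i.e. the maximum of `∑_{i ∈ S} |xᵢ|` over subsets `S` of cardinality `k`. -/
noncomputable def kyFan (n k : ℕ) (x : Fin n → ℝ) : ℝ :=
  sSup ((fun S : Finset (Fin n) => ∑ i ∈ S, |x i|) '' {S | S.card = k})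

/-- The dual Ky Fan `k`-norm: `max(‖x‖_∞, ‖x‖₁ / k)`. -/
noncomputable def kyFanDual (n k : ℕ) (x : Fin n → ℝ) : ℝ :=
  max (linf n x) ((∑ i, |x i|) / k)

/-- A symmetric norm on `ℝⁿ`: a norm invariant under coordinate permutations
and sign changes. -/
structure IsSymmNorm (n : ℕ) (N : (Fin n → ℝ) → ℝ) : Prop where
  add_le : ∀ x y, N (x + y) ≤ N x + N y
  smul : ∀ (c : ℝ) (x), N (c • x) = |c| * N x
  pos : ∀ x, x ≠ 0 → 0 < N x
  perm : ∀ (σ : Equiv.Perm (Fin n)) (x), N (x ∘ σ) = N x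
  sign : ∀ (ε x : Fin n → ℝ), (∀ i, ε i = 1 ∨ ε i = -1) → N (ε * x) = N x

/-- The derivation `∂f = (f ⊗ 𝟏 − 𝟏 ⊗ f)/√(2n)`, i.e. `(∂f)_{ij} = (fᵢ − fⱼ)/√(2n)`. -/
noncomputable def Dmat (n : ℕ) (f : Fin n → ℝ) : Matrix (Fin n) (Fin n) ℝ :=
  fun i j => (f i - f j) / Real.sqrt (2 * n)

/-- The dual norm of `N`: `‖x‖_* = sup { ⟨x, y⟩ : N y ≤ 1 }`. -/
noncomputable def dualN (n : ℕ) (N : (Fin n → ℝ) → ℝ) (x : Fin n → ℝ) : ℝ :=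
  sSup {t | ∃ y, N y ≤ 1 ∧ t = ∑ i, x i * y i}

/-- The seminorm `‖A‖_∂ = max { Tr(Aᵀ ∂h) : ‖h‖_* ≤ 1 }` on `Mₙ(ℝ)`. -/
noncomputable def dnorm (n : ℕ) (N : (Fin n → ℝ) → ℝ) (A : Matrix (Fin n) (Fin n) ℝ) : ℝ :=
  sSup {t | ∃ h, dualN n N h ≤ 1 ∧ t = ∑ i, ∑ j, A i j * Dmat n h i j}

open Matrix

theorem Seminorm.exists_dual_le_and_apply_eq {E : Type*} [AddCommGroup E] [Module ℝ E]
    (p : Seminorm ℝ E) (x : E) :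
    ∃ ℓ : Module.Dual ℝ E, (∀ y, ℓ y ≤ p y) ∧ ℓ x = p x := by
  rcases eq_or_ne x 0 with rfl | hx
  · exact ⟨0, fun y => by simp, by simp⟩
  let coord := LinearEquiv.coord ℝ E x hx
  obtain ⟨ℓ, hℓx, hℓp⟩ := Module.Dual.exists_extension_of_le_seminorm_real (p := p)
    (ℝ ∙ x) (p x • coord.toLinearMap) fun z => by
      conv_rhs => rw [← LinearEquiv.coord_apply_smul ℝ E x hx z]
      rw [map_smul_eq_mul, Real.norm_eq_abs, LinearMap.smul_apply, smul_eq_mul, mul_comm]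
      exact mul_le_mul_of_nonneg_right (le_abs_self _) (apply_nonneg _ _)
  refine ⟨ℓ, fun y => (le_abs_self _).trans (hℓp y), ?_⟩
  simpa [coord, LinearEquiv.coord_self] using hℓx ⟨x, Submodule.mem_span_singleton_self x⟩

section Derivation

variable {n : ℕ}

noncomputable def DmatAdj (n : ℕ) (A : Matrix (Fin n) (Fin n) ℝ) : Fin n → ℝ :=
  fun i => ∑ j, (A i j - A j i) / Real.sqrt (2 * n)

theorem sum_sum_mul_Dmat (A : Matrix (Fin n) (Fin n) ℝ) (h : Fin n → ℝ) :
    ∑ i, ∑ j, A i j * Dmat n h i j = ∑ i, h i * DmatAdj n A i := by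
  set s := Real.sqrt (2 * n)
  have hswap : ∑ i, ∑ j, A i j * h j / s = ∑ i, ∑ j, A j i * h i / s := Finset.sum_comm
  calc ∑ i, ∑ j, A i j * Dmat n h i j
      = ∑ i, ∑ j, A i j * h i / s - ∑ i, ∑ j, A i j * h j / s := by
        simp only [Dmat, ← Finset.sum_sub_distrib]
        exact Finset.sum_congr rfl fun i _ => Finset.sum_congr rfl fun j _ => by ring
    _ = ∑ i, h i * DmatAdj n A i := by
        simp only [hswap, DmatAdj, Finset.mul_sum, ← Finset.sum_sub_distrib]
        exact Finset.sum_congr rfl fun i _ => Finset.sum_congr rfl fun j _ => by ring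

noncomputable def weightedLaplacian (n : ℕ) (g f : Fin n → ℝ) : Fin n → ℝ :=
  fun i => ∑ j, (g i + g j) * (f i - f j) / (2 * n)

theorem DmatAdj_Dmat_mul_right (f g : Fin n → ℝ) :
    DmatAdj n (fun i j => Dmat n f i j * g j) = weightedLaplacian n g f := by
  ext i
  simp only [DmatAdj, weightedLaplacian, Dmat]
  set s := Real.sqrt (2 * n)
  have hs : s ^ 2 = 2 * n := Real.sq_sqrt (by positivity)
  refine Finset.sum_congr rfl fun j _ => ?_
  rw [← hs]
  ring

theorem DmatAdj_Dmat_mul_left (f g : Fin n → ℝ) :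
    DmatAdj n (fun i j => g i * Dmat n f i j) = weightedLaplacian n g f := by
  rw [← DmatAdj_Dmat_mul_right]
  ext i
  simp only [DmatAdj, Dmat]
  exact Finset.sum_congr rfl fun j _ => by ring

theorem DmatAdj_Dmat (f : Fin n → ℝ) : DmatAdj n (Dmat n f) = weightedLaplacian n 1 f := by
  rw [← DmatAdj_Dmat_mul_right]
  simp

theorem weightedLaplacian_apply (g f : Fin n → ℝ) (i : Fin n) :
    weightedLaplacian n g f i
      = (n * g i * f i - g i * ∑ j, f j + f i * ∑ j, g j - ∑ j, g j * f j) / (2 * n) := by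
  rw [weightedLaplacian, ← Finset.sum_div]
  congr 1
  simp only [add_mul, mul_sub, Finset.sum_add_distrib, Finset.sum_sub_distrib, ← Finset.mul_sum,
    ← Finset.sum_mul, Finset.sum_const, Finset.card_univ, Fintype.card_fin, nsmul_eq_mul]
  ring

theorem weightedLaplacian_one_apply (f : Fin n → ℝ) (i : Fin n) :
    weightedLaplacian n 1 f i = f i - (∑ j, f j) / n := by
  have hn : (n : ℝ) ≠ 0 := Nat.cast_ne_zero.mpr (Fin.pos i).ne'
  rw [weightedLaplacian_apply]
  simp only [Pi.one_apply, one_mul, Finset.sum_const, Finset.card_univ, Fintype.card_fin,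
    nsmul_eq_mul, mul_one]
  field_simp
  ring

noncomputable def weightedLaplacianLin (n : ℕ) (f : Fin n → ℝ) :
    (Fin n → ℝ) →ₗ[ℝ] Fin n → ℝ where
  toFun g := weightedLaplacian n g f
  map_add' g g' := by
    ext i
    simp only [weightedLaplacian, Pi.add_apply, ← Finset.sum_add_distrib]
    exact Finset.sum_congr rfl fun j _ => by ring
  map_smul' c g := by
    ext i
    simp only [weightedLaplacian, Pi.smul_apply, smul_eq_mul, RingHom.id_apply, Finset.mul_sum]
    exact Finset.sum_congr rfl fun j _ => by ring

/-- For a sign vector `ε` with `P = {i | εᵢ = 1}`, `n` times this matrix has diagonal entries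
`#P` on `P` and `#Pᶜ` on `Pᶜ`, entries `1` between `P` and `Pᶜ`, and `0` elsewhere. -/
noncomputable def signMixingMatrix (n : ℕ) (ε : Fin n → ℝ) : Matrix (Fin n) (Fin n) ℝ :=
  fun i j => (1 - ε i * ε j + if i = j then n + ε i * ∑ k, ε k else 0) / (2 * n)

theorem signMixingMatrix_mem_doublyStochastic {ε : Fin n → ℝ} (hε : ∀ i, |ε i| ≤ 1) :
    signMixingMatrix n ε ∈ doublyStochastic ℝ (Fin n) := by
  have hprod : ∀ i j, |ε i * ε j| ≤ 1 := fun i j => by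
    rw [abs_mul]; exact mul_le_one₀ (hε i) (abs_nonneg _) (hε j)
  have hrow : ∀ i, ∑ j, signMixingMatrix n ε i j = 1 := fun i => by
    have hn : (n : ℝ) ≠ 0 := Nat.cast_ne_zero.mpr (Fin.pos i).ne'
    simp only [signMixingMatrix, ← Finset.sum_div, Finset.sum_add_distrib, Finset.sum_sub_distrib,
      Finset.sum_ite_eq, Finset.mem_univ, if_true, ← Finset.mul_sum, Finset.sum_const,
      Finset.card_univ, Fintype.card_fin, nsmul_eq_mul, mul_one]
    field_simp
    ring
  refine mem_doublyStochastic_iff_sum.mpr ⟨fun i j => ?_, hrow, fun j => ?_⟩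
  · refine div_nonneg (add_nonneg ?_ ?_) (by positivity)
    · linarith [le_abs_self (ε i * ε j), hprod i j]
    split_ifs
    · have hsum : |ε i * ∑ k, ε k| ≤ n := by
        rw [abs_mul, ← one_mul (n : ℝ)]
        refine mul_le_mul (hε i) ((Finset.abs_sum_le_sum_abs _ _).trans ?_)
          (abs_nonneg _) zero_le_one
        simpa using Finset.sum_le_sum fun k (_ : k ∈ Finset.univ) => hε k
      linarith [neg_abs_le (ε i * ∑ k, ε k)]
    · exact le_rfl
  · rw [← hrow j]
    refine Finset.sum_congr rfl fun i _ => ?_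
    by_cases h : i = j
    · rw [h]
    · simp only [signMixingMatrix, if_neg h, if_neg (Ne.symm h), mul_comm (ε i)]

theorem signMixingMatrix_mulVec_apply (ε x : Fin n → ℝ) (i : Fin n) :
    (signMixingMatrix n ε *ᵥ x) i
      = (∑ j, x j - ε i * ∑ j, ε j * x j + (n + ε i * ∑ k, ε k) * x i) / (2 * n) := by
  simp only [mulVec, dotProduct, signMixingMatrix, div_mul_eq_mul_div, ← Finset.sum_div]
  congr 1
  simp only [add_mul, sub_mul, one_mul, Finset.sum_add_distrib, Finset.sum_sub_distrib, ite_mul,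
    zero_mul, Finset.sum_ite_eq, Finset.mem_univ, if_true, mul_assoc, ← Finset.mul_sum]

theorem weightedLaplacian_sign_eq {ε : Fin n → ℝ} (hε : ∀ i, ε i = 1 ∨ ε i = -1) (f : Fin n → ℝ) :
    weightedLaplacian n ε f = ε * (signMixingMatrix n ε *ᵥ weightedLaplacian n 1 f) := by
  ext i
  have hn : (n : ℝ) ≠ 0 := Nat.cast_ne_zero.mpr (Fin.pos i).ne'
  have hεi : ε i * ε i = 1 := by rcases hε i with h | h <;> simp [h]
  simp only [Pi.mul_apply, signMixingMatrix_mulVec_apply, weightedLaplacian_one_apply]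
  rw [weightedLaplacian_apply]
  simp only [mul_sub, Finset.sum_sub_distrib, Finset.sum_const, Finset.card_univ,
    Fintype.card_fin, nsmul_eq_mul, ← Finset.sum_mul]
  field_simp
  linear_combination n * (∑ j, ε j * f j - f i * ∑ j, ε j) * hεi

end Derivation

namespace IsSymmNorm

variable {n : ℕ} {N : (Fin n → ℝ) → ℝ}

def toSeminorm (hN : IsSymmNorm n N) : Seminorm ℝ (Fin n → ℝ) :=
  Seminorm.of N hN.add_le fun c x => by rw [Real.norm_eq_abs]; exact hN.smul c x

theorem nonneg (hN : IsSymmNorm n N) (x : Fin n → ℝ) : 0 ≤ N x :=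
  apply_nonneg hN.toSeminorm x

theorem convexOn (hN : IsSymmNorm n N) : ConvexOn ℝ Set.univ N :=
  hN.toSeminorm.convexOn

theorem apply_mulVec_le (hN : IsSymmNorm n N) {M : Matrix (Fin n) (Fin n) ℝ}
    (hM : M ∈ doublyStochastic ℝ (Fin n)) (x : Fin n → ℝ) : N (M *ᵥ x) ≤ N x := by
  rw [← SetLike.mem_coe, doublyStochastic_eq_convexHull_permMatrix] at hM
  let evalAt : Matrix (Fin n) (Fin n) ℝ →ₗ[ℝ] Fin n → ℝ :=
    (LinearMap.applyₗ x).comp Matrix.toLin'.toLinearMap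
  obtain ⟨_, ⟨σ, rfl⟩, hσ⟩ :=
    (hN.convexOn.comp_linearMap evalAt).exists_ge_of_mem_convexHull (Set.subset_univ _) hM
  simpa [evalAt, permMatrix_mulVec, hN.perm] using hσ

theorem abs_mul_apply_single_le (hN : IsSymmNorm n N) (y : Fin n → ℝ) (i : Fin n) :
    |y i| * N (Pi.single i 1) ≤ N y := by
  let ε : Fin n → ℝ := fun k => if k = i then 1 else -1
  have hε : ∀ k, ε k = 1 ∨ ε k = -1 := fun k => by by_cases h : k = i <;> simp [ε, h]
  have hsplit :
      y i • (Pi.single i 1 : Fin n → ℝ) = (1 / 2 : ℝ) • y + (1 / 2 : ℝ) • (ε * y) := by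
    ext k
    by_cases h : k = i
    · subst h; simp [ε]; ring
    · simp [ε, h]
  rw [← hN.smul, hsplit]
  calc N ((1 / 2 : ℝ) • y + (1 / 2 : ℝ) • (ε * y))
      ≤ |1 / 2| * N y + |1 / 2| * N (ε * y) :=
        (hN.add_le _ _).trans_eq (by rw [hN.smul, hN.smul])
    _ = N y := by rw [hN.sign ε y hε]; norm_num; ring

theorem bddAbove_dual (hN : IsSymmNorm n N) (h : Fin n → ℝ) :
    BddAbove {t | ∃ y, N y ≤ 1 ∧ t = ∑ i, h i * y i} := by
  refine ⟨∑ i, |h i| / N (Pi.single i 1), ?_⟩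
  rintro t ⟨y, hy, rfl⟩
  refine Finset.sum_le_sum fun i _ => ?_
  have hpos : 0 < N (Pi.single i 1) := hN.pos _ (by simp)
  have hyi : |y i| ≤ 1 / N (Pi.single i 1) :=
    (le_div_iff₀ hpos).mpr ((hN.abs_mul_apply_single_le y i).trans hy)
  calc h i * y i ≤ |h i| * |y i| := by rw [← abs_mul]; exact le_abs_self _
    _ ≤ |h i| * (1 / N (Pi.single i 1)) := mul_le_mul_of_nonneg_left hyi (abs_nonneg _)
    _ = |h i| / N (Pi.single i 1) := mul_one_div _ _

theorem sum_mul_le_of_dualN_le_one (hN : IsSymmNorm n N) {h : Fin n → ℝ}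
    (hh : dualN n N h ≤ 1) (z : Fin n → ℝ) : ∑ i, h i * z i ≤ N z := by
  rcases eq_or_ne z 0 with rfl | hz
  · simp [hN.nonneg]
  have hNz := hN.pos z hz
  have hnormed : ∑ i, h i * ((N z)⁻¹ * z i) ≤ dualN n N h :=
    le_csSup (hN.bddAbove_dual h) ⟨(N z)⁻¹ • z, by
      rw [hN.smul, abs_of_pos (inv_pos.mpr hNz), inv_mul_cancel₀ hNz.ne'], rfl⟩
  calc ∑ i, h i * z i = N z * ∑ i, h i * ((N z)⁻¹ * z i) := by
        rw [Finset.mul_sum]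
        exact Finset.sum_congr rfl fun i _ => by field_simp
    _ ≤ N z * 1 := mul_le_mul_of_nonneg_left (hnormed.trans hh) hNz.le
    _ = N z := mul_one _

theorem exists_dualN_le_one_sum_mul_eq (hN : IsSymmNorm n N) (z : Fin n → ℝ) :
    ∃ h, dualN n N h ≤ 1 ∧ ∑ i, h i * z i = N z := by
  obtain ⟨ℓ, hℓN, hℓz⟩ := hN.toSeminorm.exists_dual_le_and_apply_eq z
  have hℓ : ∀ y, ∑ i, ℓ (Pi.single i 1) * y i = ℓ y := fun y => by
    conv_rhs => rw [pi_eq_sum_univ' y]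
    simp [map_sum, mul_comm]
  refine ⟨fun i => ℓ (Pi.single i 1), Real.sSup_le ?_ zero_le_one, (hℓ z).trans hℓz⟩
  rintro t ⟨y, hy, rfl⟩
  exact (hℓ y).trans_le ((hℓN y).trans hy)

theorem dnorm_eq (hN : IsSymmNorm n N) (A : Matrix (Fin n) (Fin n) ℝ) :
    dnorm n N A = N (DmatAdj n A) := by
  have hle : ∀ t ∈ {t | ∃ h, dualN n N h ≤ 1 ∧ t = ∑ i, ∑ j, A i j * Dmat n h i j},
      t ≤ N (DmatAdj n A) := by
    rintro t ⟨h, hh, rfl⟩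
    rw [sum_sum_mul_Dmat]
    exact hN.sum_mul_le_of_dualN_le_one hh _
  obtain ⟨h, hh, hval⟩ := hN.exists_dualN_le_one_sum_mul_eq (DmatAdj n A)
  refine le_antisymm (Real.sSup_le hle (hN.nonneg _)) (le_csSup ⟨_, hle⟩ ⟨h, hh, ?_⟩)
  rw [sum_sum_mul_Dmat, hval]

theorem weightedLaplacian_sign_le (hN : IsSymmNorm n N) {ε : Fin n → ℝ}
    (hε : ∀ i, ε i = 1 ∨ ε i = -1) (f : Fin n → ℝ) :
    N (weightedLaplacian n ε f) ≤ N (weightedLaplacian n 1 f) := by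
  rw [weightedLaplacian_sign_eq hε, hN.sign ε _ hε]
  refine hN.apply_mulVec_le (signMixingMatrix_mem_doublyStochastic fun i => ?_) _
  rcases hε i with h | h <;> simp [h]

theorem weightedLaplacian_le (hN : IsSymmNorm n N) {g : Fin n → ℝ} {c : ℝ} (hc : 0 ≤ c)
    (hg : ∀ i, |g i| ≤ c) (f : Fin n → ℝ) :
    N (weightedLaplacian n g f) ≤ c * N (weightedLaplacian n 1 f) := by
  have hcube : g ∈ convexHull ℝ (Set.univ.pi fun _ => ({-c, c} : Set ℝ)) := by
    rw [convexHull_pi, convexHull_pair, segment_eq_Icc (by linarith)]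
    exact fun i _ => abs_le.mp (hg i)
  have hconvex := hN.convexOn.comp_linearMap (weightedLaplacianLin n f)
  obtain ⟨v, hv, hgv⟩ := hconvex.exists_ge_of_mem_convexHull (Set.subset_univ _) hcube
  let ε : Fin n → ℝ := fun i => if v i = c then 1 else -1
  have hvε : v = c • ε := by
    ext i
    simp only [Pi.smul_apply, smul_eq_mul, ε]
    split_ifs with hci
    · rw [hci, mul_one]
    · rcases hv i (Set.mem_univ i) with h | h
      · rw [h, mul_neg_one]
      · exact absurd h hci
  have hε : ∀ i, ε i = 1 ∨ ε i = -1 := fun i => by by_cases h : v i = c <;> simp [ε, h]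
  calc N (weightedLaplacian n g f) ≤ N (weightedLaplacian n v f) := hgv
    _ = c * N (weightedLaplacian n ε f) := by
      change N (weightedLaplacianLin n f v) = _
      rw [hvε, map_smul, hN.smul, abs_of_nonneg hc]
      rfl
    _ ≤ c * N (weightedLaplacian n 1 f) :=
      mul_le_mul_of_nonneg_left (hN.weightedLaplacian_sign_le hε f) hc

end IsSymmNorm

theorem abs_le_linf {n : ℕ} (g : Fin n → ℝ) (i : Fin n) : |g i| ≤ linf n g :=
  le_csSup (Set.finite_range _).bddAbove ⟨i, rfl⟩

theorem linf_nonneg {n : ℕ} (g : Fin n → ℝ) : 0 ≤ linf n g :=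
  Real.sSup_nonneg (by rintro _ ⟨i, rfl⟩; exact abs_nonneg _)

theorem stmt_15_general (n : ℕ) (N : (Fin n → ℝ) → ℝ) (hN : IsSymmNorm n N)
    (f g : Fin n → ℝ) :
    dnorm n N (fun i j => Dmat n f i j * g j) ≤ linf n g * dnorm n N (Dmat n f) ∧
      dnorm n N (fun i j => g i * Dmat n f i j) ≤ linf n g * dnorm n N (Dmat n f) := by
  rw [hN.dnorm_eq (fun i j => _), hN.dnorm_eq (fun i j => _), hN.dnorm_eq,
    DmatAdj_Dmat_mul_right, DmatAdj_Dmat_mul_left, DmatAdj_Dmat, and_self]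
  exact hN.weightedLaplacian_le (linf_nonneg g) (abs_le_linf g) f

/-- Theorem 3.3: the module inequalities `‖(∂f)·g‖_∂ ≤ ‖g‖_∞ ‖∂f‖_∂` and
`‖g·(∂f)‖_∂ ≤ ‖g‖_∞ ‖∂f‖_∂`. -/
theorem stmt_15 (n : ℕ) (hn : 0 < n) (N : (Fin n → ℝ) → ℝ) (hN : IsSymmNorm n N)
    (f g : Fin n → ℝ) :
    dnorm n N (fun i j => Dmat n f i j * g j) ≤ linf n g * dnorm n N (Dmat n f) ∧
      dnorm n N (fun i j => g i * Dmat n f i j) ≤ linf n g * dnorm n N (Dmat n f) :=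
  stmt_15_general n N hN f g
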